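/- Under the conditions of the contraction lemma (existence of ρ with ‖Q₀‖_u + ρ²(b−a)M₁M₂‖B‖_u ≤ ρ and 2ρ(b−a)M₁M₂‖B‖_u < 1), the equation P(t) = Q₀(t) − ∫_t^b Q^{(2)}_{r,t}P(r)B(r)P(r)Q^{(1)}_{r,t}dr has a unique solution P in C_u([a,b]; L(X₁,X₂)) with ‖P‖_u ≤ ρ. -/

import Mathlib

/-!
The right-hand side of the equation defines a map on the closed ball `B_ρ` of strongly
continuous maps `[a,b] → L(X₁,X₂)` with the sup metric. The first condition on `ρ` makes it map
`B_ρ` into itself; since `PBP − P'BP' = (P − P')BP + P'B(P − P')`, the second makes it a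
contraction with constant `2ρ(b−a)M₁M₂‖B‖ᵤ`. As `B_ρ` is closed in the complete space of
`L(X₁,X₂)`-valued functions with the uniform metric, the Banach fixed point theorem gives
existence and uniqueness. Strong continuity of the integral term in `t` comes from dominated
convergence, the integrand being only separately (and strongly) continuous in `t` and `r`.
-/

open Set Filter Topology MeasureTheory
open scoped UniformConvergence NNReal ENNReal

section

variable {𝕜 α E F : Type*} [NontriviallyNormedField 𝕜] [TopologicalSpace α]
  [NormedAddCommGroup E] [NormedSpace 𝕜 E] [NormedAddCommGroup F] [NormedSpace 𝕜 F]

theorem ContinuousOn.clm_apply_of_norm_le {A : α → E →L[𝕜] F} {v : α → E} {s : Set α} {M : ℝ}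
    (hA : ∀ y, ContinuousOn (fun t => A t y) s) (hM : ∀ t ∈ s, ‖A t‖ ≤ M)
    (hv : ContinuousOn v s) : ContinuousOn (fun t => A t (v t)) s := by
  intro t₀ ht₀
  have hsmall : Tendsto (fun t => A t (v t - v t₀)) (𝓝[s] t₀) (𝓝 0) := by
    refine squeeze_zero_norm' ?_ (by
      simpa using ((tendsto_iff_norm_sub_tendsto_zero.1 (hv t₀ ht₀)).const_mul M))
    filter_upwards [self_mem_nhdsWithin] with t ht using (A t).le_of_opNorm_le (hM t ht) _
  have h := hsmall.add (hA (v t₀) t₀ ht₀)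
  simp only [← map_add, sub_add_cancel, zero_add] at h
  exact h

theorem ContinuousLinearMap.norm_comp_comp_le {G H : Type*} [NormedAddCommGroup G]
    [NormedSpace 𝕜 G] [NormedAddCommGroup H] [NormedSpace 𝕜 H]
    (f : G →L[𝕜] H) (g : F →L[𝕜] G) (h : E →L[𝕜] F) : ‖f ∘L g ∘L h‖ ≤ ‖f‖ * ‖g‖ * ‖h‖ :=
  (opNorm_comp_le _ _).trans <| by
    rw [mul_assoc]; gcongr; exact opNorm_comp_le _ _

theorem ContinuousLinearMap.norm_comp_comp_sub_comp_comp_le (P P' : E →L[𝕜] F)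
    (B : F →L[𝕜] E) :
    ‖P ∘L B ∘L P - P' ∘L B ∘L P'‖ ≤ (‖P‖ + ‖P'‖) * ‖B‖ * ‖P - P'‖ := by
  have h : P ∘L B ∘L P - P' ∘L B ∘L P' = (P - P') ∘L B ∘L P + P' ∘L B ∘L (P - P') := by
    ext x; simp
  rw [h]
  calc _ ≤ ‖P - P'‖ * (‖B‖ * ‖P‖) + ‖P'‖ * (‖B‖ * ‖P - P'‖) := by
        refine (norm_add_le _ _).trans (add_le_add ?_ ?_) <;>
        exact (opNorm_comp_le _ _).trans (by gcongr; exact opNorm_comp_le _ _)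
    _ = _ := by ring

theorem UniformFun.isClosed_setOf_continuous_apply_norm_le (ρ : ℝ) :
    IsClosed {f : α →ᵤ (E →L[𝕜] F) |
      (∀ x, Continuous fun t => toFun f t x) ∧ ∀ t, ‖toFun f t‖ ≤ ρ} := by
  simp only [ofPred_and, ofPred_forall]
  refine (isClosed_iInter fun x => ?_).inter (isClosed_iInter fun t => ?_)
  · exact IsClosed.preimage (UniformFun.postcomp_uniformContinuous
      (ContinuousLinearMap.apply 𝕜 F x).uniformContinuous).continuous
      (UniformFun.isClosed_setOfPred_continuous α)
  · exact isClosed_le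
      (continuous_norm.comp (UniformFun.uniformContinuous_eval (E →L[𝕜] F) t).continuous)
      continuous_const

end

theorem norm_intervalIntegral_le_of_mem_Icc {E : Type*} [NormedAddCommGroup E] [NormedSpace ℝ E]
    {f : ℝ → E} {a b t C : ℝ} (ht : t ∈ Icc a b) (hf : ∀ r ∈ Icc t b, ‖f r‖ ≤ C) :
    ‖∫ r in t..b, f r‖ ≤ (b - a) * C := by
  refine (intervalIntegral.norm_integral_le_of_norm_le_const (C := C) fun r hr => ?_).trans ?_
  · rw [uIoc_of_le ht.2] at hr
    exact hf r (Ioc_subset_Icc_self hr)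
  · have hC : 0 ≤ C := (norm_nonneg _).trans (hf b ⟨ht.2, le_rfl⟩)
    rw [abs_of_nonneg (sub_nonneg.2 ht.2), mul_comm]
    gcongr
    exact ht.1

theorem continuousOn_intervalIntegral_of_separately_continuous {E : Type*}
    [NormedAddCommGroup E] [NormedSpace ℝ E] {F : ℝ → ℝ → E} {a b C : ℝ}
    (hcont_r : ∀ t ∈ Icc a b, ContinuousOn (F t) (Icc t b))
    (hcont_t : ∀ r ∈ Icc a b, ContinuousOn (fun t => F t r) (Icc a r))
    (hC : ∀ t r, a ≤ t → t ≤ r → r ≤ b → ‖F t r‖ ≤ C) :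
    ContinuousOn (fun t => ∫ r in t..b, F t r) (Icc a b) := by
  -- Cutting `F t` off below `t` fixes the lower limit at `a`, so dominated convergence applies.
  have hind : EqOn (fun t => ∫ r in a..b, (Ioi t).indicator (F t) r)
      (fun t => ∫ r in t..b, F t r) (Icc a b) := fun t ht => by
    simp only [intervalIntegral.integral_of_le ht.2,
      intervalIntegral.integral_of_le (ht.1.trans ht.2), setIntegral_indicator measurableSet_Ioi,
      Ioc_inter_Ioi, sup_eq_right.2 ht.1]
  refine ContinuousOn.congr (fun t₀ ht₀ => ?_) hind.symm
  have hab : a ≤ b := ht₀.1.trans ht₀.2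
  have hC0 : 0 ≤ C := (norm_nonneg _).trans (hC a a le_rfl le_rfl hab)
  refine intervalIntegral.continuousWithinAt_of_dominated_interval (bound := fun _ => C) ?_ ?_
    intervalIntegrable_const ?_
  · filter_upwards [self_mem_nhdsWithin] with t ht
    rw [aestronglyMeasurable_indicator_iff measurableSet_Ioi,
      Measure.restrict_restrict measurableSet_Ioi]
    refine ((hcont_r t ht).aestronglyMeasurable measurableSet_Icc).mono_measure
      (Measure.restrict_mono (fun r hr => ?_) le_rfl)
    rw [uIoc_of_le hab] at hr
    exact ⟨hr.1.le, hr.2.2⟩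
  · filter_upwards [self_mem_nhdsWithin] with t ht
    refine Eventually.of_forall fun r hr => ?_
    rw [uIoc_of_le hab] at hr
    by_cases htr : r ∈ Ioi t
    · rw [indicator_of_mem htr]; exact hC t r ht.1 (le_of_lt htr) hr.2
    · rw [indicator_of_notMem htr, norm_zero]; exact hC0
  · filter_upwards [Measure.ae_ne volume t₀] with r hrt₀ hr
    rw [uIoc_of_le hab] at hr
    rcases hrt₀.lt_or_gt with hlt | hgt
    · have hzero : ∀ᶠ t in 𝓝[Icc a b] t₀, (Ioi t).indicator (F t) r = 0 :=
        eventually_nhdsWithin_of_eventually_nhds <|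
          (lt_mem_nhds hlt).mono fun t hrt => indicator_of_notMem (not_lt.2 hrt.le) _
      exact continuousWithinAt_const.congr_of_eventuallyEq hzero (hzero.self_of_nhdsWithin ht₀)
    · have hF : ∀ᶠ t in 𝓝[Icc a b] t₀, (Ioi t).indicator (F t) r = F t r :=
        eventually_nhdsWithin_of_eventually_nhds <|
          (gt_mem_nhds hgt).mono fun t htr => indicator_of_mem htr _
      have hmem : Icc a r ∈ 𝓝[Icc a b] t₀ :=
        mem_nhdsWithin.2 ⟨Iio r, isOpen_Iio, hgt, fun t ht => ⟨ht.2.1, ht.1.le⟩⟩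
      exact ((hcont_t r ⟨hr.1.le, hr.2⟩ t₀ ⟨ht₀.1, hgt.le⟩).mono_of_mem_nhdsWithin
        hmem).congr_of_eventuallyEq hF (hF.self_of_nhdsWithin ht₀)

structure RiccatiData (X₁ X₂ : Type*) [NormedAddCommGroup X₁] [NormedSpace ℝ X₁]
    [NormedAddCommGroup X₂] [NormedSpace ℝ X₂] where
  a : ℝ
  b : ℝ
  hab : a ≤ b
  Q1 : ℝ → ℝ → X₁ →L[ℝ] X₁
  Q2 : ℝ → ℝ → X₂ →L[ℝ] X₂
  M₁ : ℝ
  M₂ : ℝ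
  hQ1bdd : ∀ t s : ℝ, a ≤ t → t ≤ s → s ≤ b → ‖Q1 s t‖ ≤ M₁
  hQ2bdd : ∀ t s : ℝ, a ≤ t → t ≤ s → s ≤ b → ‖Q2 s t‖ ≤ M₂
  hQ1sc₁ : ∀ x : X₁, ∀ t ∈ Icc a b, ContinuousOn (fun s => Q1 s t x) (Icc t b)
  hQ1sc₂ : ∀ x : X₁, ∀ s ∈ Icc a b, ContinuousOn (fun t => Q1 s t x) (Icc a s)
  hQ2sc₁ : ∀ y : X₂, ∀ t ∈ Icc a b, ContinuousOn (fun s => Q2 s t y) (Icc t b)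
  hQ2sc₂ : ∀ y : X₂, ∀ s ∈ Icc a b, ContinuousOn (fun t => Q2 s t y) (Icc a s)
  B : ℝ → X₂ →L[ℝ] X₁
  hBsc : ∀ y : X₂, ContinuousOn (fun t => B t y) (Icc a b)
  nB : ℝ
  hnB : ∀ t ∈ Icc a b, ‖B t‖ ≤ nB
  Q0 : ℝ → X₁ →L[ℝ] X₂
  hQ0sc : ∀ x : X₁, ContinuousOn (fun t => Q0 t x) (Icc a b)
  nQ0 : ℝ
  hnQ0 : ∀ t ∈ Icc a b, ‖Q0 t‖ ≤ nQ0
  ρ : ℝ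
  hρ₁ : nQ0 + ρ ^ 2 * (b - a) * M₁ * M₂ * nB ≤ ρ
  hρ₂ : 2 * ρ * (b - a) * M₁ * M₂ * nB < 1

namespace RiccatiData

open ContinuousLinearMap Function UniformFun

variable {X₁ X₂ : Type*} [NormedAddCommGroup X₁] [NormedSpace ℝ X₁]
  [NormedAddCommGroup X₂] [NormedSpace ℝ X₂] (D : RiccatiData X₁ X₂)

theorem M₁_nonneg : 0 ≤ D.M₁ := (norm_nonneg _).trans (D.hQ1bdd D.a D.a le_rfl le_rfl D.hab)

theorem M₂_nonneg : 0 ≤ D.M₂ := (norm_nonneg _).trans (D.hQ2bdd D.a D.a le_rfl le_rfl D.hab)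

theorem nB_nonneg : 0 ≤ D.nB := (norm_nonneg _).trans (D.hnB D.a ⟨le_rfl, D.hab⟩)

theorem nQ0_le_ρ : D.nQ0 ≤ D.ρ := by
  have := D.M₁_nonneg; have := D.M₂_nonneg; have := D.nB_nonneg; have := sub_nonneg.2 D.hab
  have : 0 ≤ D.ρ ^ 2 * (D.b - D.a) * D.M₁ * D.M₂ * D.nB := by positivity
  linarith [D.hρ₁]

theorem ρ_nonneg : 0 ≤ D.ρ :=
  (norm_nonneg _).trans ((D.hnQ0 D.a ⟨le_rfl, D.hab⟩).trans D.nQ0_le_ρ)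

def K : ℝ≥0 :=
  ⟨2 * D.ρ * (D.b - D.a) * D.M₁ * D.M₂ * D.nB, by
    have := D.ρ_nonneg; have := D.M₁_nonneg; have := D.M₂_nonneg; have := D.nB_nonneg
    have := sub_nonneg.2 D.hab
    positivity⟩

theorem coe_K : (D.K : ℝ) = 2 * D.ρ * (D.b - D.a) * D.M₁ * D.M₂ * D.nB :=
  rfl

def kernel (P : ℝ → X₁ →L[ℝ] X₂) (t r : ℝ) : X₁ →L[ℝ] X₂ :=
  D.Q2 r t ∘L (P r ∘L D.B r ∘L P r) ∘L D.Q1 r t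

def InBall (P : ℝ → X₁ →L[ℝ] X₂) : Prop :=
  (∀ x, ContinuousOn (fun t => P t x) (Icc D.a D.b)) ∧ ∀ t ∈ Icc D.a D.b, ‖P t‖ ≤ D.ρ

def IsSolution (P : ℝ → X₁ →L[ℝ] X₂) : Prop :=
  ∀ t ∈ Icc D.a D.b, ∀ x, P t x = D.Q0 t x - ∫ r in t..D.b, D.kernel P t r x

theorem norm_kernel_le {P : ℝ → X₁ →L[ℝ] X₂} (hP : D.InBall P) {t r : ℝ} (ht : D.a ≤ t)
    (htr : t ≤ r) (hr : r ≤ D.b) : ‖D.kernel P t r‖ ≤ D.M₂ * (D.ρ * D.nB * D.ρ) * D.M₁ := by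
  have hr' : r ∈ Icc D.a D.b := ⟨ht.trans htr, hr⟩
  calc ‖D.kernel P t r‖ ≤ ‖D.Q2 r t‖ * (‖P r‖ * ‖D.B r‖ * ‖P r‖) * ‖D.Q1 r t‖ :=
        (norm_comp_comp_le _ _ _).trans (by gcongr; exact norm_comp_comp_le _ _ _)
    _ ≤ _ := by
        have := D.ρ_nonneg; have := D.nB_nonneg; have := D.M₂_nonneg
        gcongr
        exacts [D.hQ2bdd t r ht htr hr, hP.2 r hr', D.hnB r hr', hP.2 r hr',
          D.hQ1bdd t r ht htr hr]

theorem norm_kernel_sub_le {P P' : ℝ → X₁ →L[ℝ] X₂} (hP : D.InBall P) (hP' : D.InBall P')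
    {δ : ℝ} (hδ : ∀ r ∈ Icc D.a D.b, ‖P r - P' r‖ ≤ δ) {t r : ℝ} (ht : D.a ≤ t)
    (htr : t ≤ r) (hr : r ≤ D.b) :
    ‖D.kernel P t r - D.kernel P' t r‖ ≤ D.M₂ * ((D.ρ + D.ρ) * D.nB * δ) * D.M₁ := by
  have hr' : r ∈ Icc D.a D.b := ⟨ht.trans htr, hr⟩
  have hsub : D.kernel P t r - D.kernel P' t r =
      D.Q2 r t ∘L (P r ∘L D.B r ∘L P r - P' r ∘L D.B r ∘L P' r) ∘L D.Q1 r t := by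
    simp only [kernel, ContinuousLinearMap.sub_comp, ContinuousLinearMap.comp_sub]
  calc ‖D.kernel P t r - D.kernel P' t r‖
      ≤ ‖D.Q2 r t‖ * ((‖P r‖ + ‖P' r‖) * ‖D.B r‖ * ‖P r - P' r‖) * ‖D.Q1 r t‖ := by
        rw [hsub]
        exact (norm_comp_comp_le _ _ _).trans
          (by gcongr; exact norm_comp_comp_sub_comp_comp_le _ _ _)
    _ ≤ _ := by
        have := D.ρ_nonneg; have := D.nB_nonneg; have := D.M₂_nonneg
        have : 0 ≤ δ := (norm_nonneg _).trans (hδ r hr')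
        gcongr
        exacts [D.hQ2bdd t r ht htr hr, hP.2 r hr', hP'.2 r hr', D.hnB r hr', hδ r hr',
          D.hQ1bdd t r ht htr hr]

theorem continuousOn_kernel_apply_right {P : ℝ → X₁ →L[ℝ] X₂} (hP : D.InBall P) {t : ℝ}
    (ht : t ∈ Icc D.a D.b) (x : X₁) : ContinuousOn (fun r => D.kernel P t r x) (Icc t D.b) := by
  have hsub : Icc t D.b ⊆ Icc D.a D.b := Icc_subset_Icc_left ht.1
  have hPc : ∀ y, ContinuousOn (fun r => P r y) (Icc t D.b) := fun y => (hP.1 y).mono hsub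
  have hPb : ∀ r ∈ Icc t D.b, ‖P r‖ ≤ D.ρ := fun r hr => hP.2 r (hsub hr)
  show ContinuousOn (fun r => D.Q2 r t (P r (D.B r (P r (D.Q1 r t x))))) _
  refine .clm_apply_of_norm_le (fun y => D.hQ2sc₁ y t ht)
    (fun r hr => D.hQ2bdd t r ht.1 hr.1 hr.2) ?_
  refine .clm_apply_of_norm_le hPc hPb ?_
  refine .clm_apply_of_norm_le (fun y => (D.hBsc y).mono hsub) (fun r hr => D.hnB r (hsub hr)) ?_
  exact .clm_apply_of_norm_le hPc hPb (D.hQ1sc₁ x t ht)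

theorem continuousOn_kernel_apply_left (P : ℝ → X₁ →L[ℝ] X₂) {r : ℝ} (hr : r ∈ Icc D.a D.b)
    (x : X₁) : ContinuousOn (fun t => D.kernel P t r x) (Icc D.a r) :=
  ContinuousOn.clm_apply_of_norm_le (A := fun t => D.Q2 r t) (fun y => D.hQ2sc₂ y r hr)
    (fun t ht => D.hQ2bdd t r ht.1 ht.2 hr.2)
    ((P r ∘L D.B r ∘L P r).continuous.comp_continuousOn (D.hQ1sc₂ x r hr))

theorem integral_kernel_congr {P P' : ℝ → X₁ →L[ℝ] X₂} (h : EqOn P P' (Icc D.a D.b)) {t : ℝ}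
    (ht : t ∈ Icc D.a D.b) (x : X₁) :
    ∫ r in t..D.b, D.kernel P t r x = ∫ r in t..D.b, D.kernel P' t r x :=
  intervalIntegral.integral_congr fun r hr => by
    rw [uIcc_of_le ht.2] at hr
    simp only [kernel, h ⟨ht.1.trans hr.1, hr.2⟩]

theorem intervalIntegrable_kernel_apply {P : ℝ → X₁ →L[ℝ] X₂} (hP : D.InBall P) {t : ℝ}
    (ht : t ∈ Icc D.a D.b) (x : X₁) :
    IntervalIntegrable (fun r => D.kernel P t r x) volume t D.b :=
  (D.continuousOn_kernel_apply_right hP ht x).intervalIntegrable_of_Icc ht.2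

noncomputable def integralCLM {P : ℝ → X₁ →L[ℝ] X₂} (hP : D.InBall P) (t : Icc D.a D.b) :
    X₁ →L[ℝ] X₂ :=
  LinearMap.mkContinuous
    { toFun := fun x => ∫ r in t..D.b, D.kernel P t r x
      map_add' := fun x y => by
        simp only [map_add]
        exact intervalIntegral.integral_add (D.intervalIntegrable_kernel_apply hP t.2 x)
          (D.intervalIntegrable_kernel_apply hP t.2 y)
      map_smul' := fun c x => by
        simp only [map_smul, RingHom.id_apply]
        exact intervalIntegral.integral_smul c _ }
    ((D.b - D.a) * (D.M₂ * (D.ρ * D.nB * D.ρ) * D.M₁)) fun x => by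
      rw [mul_assoc]
      exact norm_intervalIntegral_le_of_mem_Icc t.2 fun r hr =>
        (D.kernel P t r).le_of_opNorm_le (D.norm_kernel_le hP t.2.1 hr.1 hr.2) x

theorem integralCLM_apply {P : ℝ → X₁ →L[ℝ] X₂} (hP : D.InBall P) (t : Icc D.a D.b) (x : X₁) :
    D.integralCLM hP t x = ∫ r in t..D.b, D.kernel P t r x :=
  rfl

theorem norm_integralCLM_le {P : ℝ → X₁ →L[ℝ] X₂} (hP : D.InBall P) (t : Icc D.a D.b) :
    ‖D.integralCLM hP t‖ ≤ (D.b - D.a) * (D.M₂ * (D.ρ * D.nB * D.ρ) * D.M₁) :=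
  LinearMap.mkContinuous_norm_le _ (mul_nonneg (sub_nonneg.2 D.hab)
    ((norm_nonneg _).trans (D.norm_kernel_le hP le_rfl le_rfl D.hab))) _

theorem norm_integralCLM_sub_le {P P' : ℝ → X₁ →L[ℝ] X₂} (hP : D.InBall P) (hP' : D.InBall P')
    {δ : ℝ} (hδ : ∀ r ∈ Icc D.a D.b, ‖P r - P' r‖ ≤ δ) (t : Icc D.a D.b) :
    ‖D.integralCLM hP t - D.integralCLM hP' t‖ ≤ D.K * δ := by
  have hδ0 : 0 ≤ δ := (norm_nonneg _).trans (hδ _ t.2)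
  refine opNorm_le_bound _ (by positivity) fun x => ?_
  rw [sub_apply, integralCLM_apply, integralCLM_apply, ← intervalIntegral.integral_sub
    (D.intervalIntegrable_kernel_apply hP t.2 x) (D.intervalIntegrable_kernel_apply hP' t.2 x)]
  calc _ ≤ (D.b - D.a) * (D.M₂ * ((D.ρ + D.ρ) * D.nB * δ) * D.M₁ * ‖x‖) :=
        norm_intervalIntegral_le_of_mem_Icc t.2 fun r hr =>
          (D.kernel P t r - D.kernel P' t r).le_of_opNorm_le
            (D.norm_kernel_sub_le hP hP' hδ t.2.1 hr.1 hr.2) x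
    _ = D.K * δ * ‖x‖ := by rw [coe_K]; ring

noncomputable def rhs {P : ℝ → X₁ →L[ℝ] X₂} (hP : D.InBall P) (t : Icc D.a D.b) :
    X₁ →L[ℝ] X₂ :=
  D.Q0 t - D.integralCLM hP t

theorem norm_rhs_le {P : ℝ → X₁ →L[ℝ] X₂} (hP : D.InBall P) (t : Icc D.a D.b) :
    ‖D.rhs hP t‖ ≤ D.ρ :=
  calc ‖D.rhs hP t‖ ≤ ‖D.Q0 t‖ + ‖D.integralCLM hP t‖ := norm_sub_le _ _
    _ ≤ D.nQ0 + (D.b - D.a) * (D.M₂ * (D.ρ * D.nB * D.ρ) * D.M₁) :=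
        add_le_add (D.hnQ0 t t.2) (D.norm_integralCLM_le hP t)
    _ ≤ D.ρ := by linarith [D.hρ₁]

theorem continuous_rhs_apply {P : ℝ → X₁ →L[ℝ] X₂} (hP : D.InBall P) (x : X₁) :
    Continuous fun t => D.rhs hP t x := by
  refine continuousOn_iff_continuous_domRestrict.1 <| (D.hQ0sc x).sub <|
    continuousOn_intervalIntegral_of_separately_continuous
      (C := D.M₂ * (D.ρ * D.nB * D.ρ) * D.M₁ * ‖x‖)
      (fun t ht => D.continuousOn_kernel_apply_right hP ht x)
      (fun r hr => D.continuousOn_kernel_apply_left P hr x) fun t r ht htr hr => ?_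
  exact (D.kernel P t r).le_of_opNorm_le (D.norm_kernel_le hP ht htr hr) x

theorem inBall_Q0 : D.InBall D.Q0 :=
  ⟨D.hQ0sc, fun t ht => (D.hnQ0 t ht).trans D.nQ0_le_ρ⟩

/-- The closed ball `B_ρ` of `C_u([a,b]; L(X₁,X₂))`, with the sup metric. -/
def ball : Set (Icc D.a D.b →ᵤ (X₁ →L[ℝ] X₂)) :=
  {f | (∀ x, Continuous fun t => toFun f t x) ∧ ∀ t, ‖toFun f t‖ ≤ D.ρ}

theorem isClosed_ball : IsClosed D.ball :=
  UniformFun.isClosed_setOf_continuous_apply_norm_le D.ρ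

noncomputable def extend (f : Icc D.a D.b →ᵤ (X₁ →L[ℝ] X₂)) : ℝ → X₁ →L[ℝ] X₂ :=
  IccExtend D.hab (toFun f)

theorem inBall_extend {f : Icc D.a D.b →ᵤ (X₁ →L[ℝ] X₂)} (hf : f ∈ D.ball) :
    D.InBall (D.extend f) :=
  ⟨fun x => (continuous_IccExtend_iff.2 (hf.1 x)).continuousOn, fun t ht => by
    rw [extend, IccExtend_of_mem _ _ ht]; exact hf.2 _⟩

def ofInBall {P : ℝ → X₁ →L[ℝ] X₂} (hP : D.InBall P) : D.ball :=
  ⟨ofFun fun t => P t, fun x => continuousOn_iff_continuous_domRestrict.1 (hP.1 x),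
    fun t => hP.2 t t.2⟩

theorem extend_ofInBall {P : ℝ → X₁ →L[ℝ] X₂} (hP : D.InBall P) :
    EqOn (D.extend (D.ofInBall hP)) P (Icc D.a D.b) :=
  fun _ ht => IccExtend_of_mem D.hab _ ht

theorem edist_ne_top (f g : D.ball) : edist f g ≠ ⊤ := by
  refine ne_top_of_le_ne_top (b := ENNReal.ofReal (D.ρ + D.ρ)) ENNReal.ofReal_ne_top
    (UniformFun.edist_le.2 fun t => ?_)
  rw [edist_le_ofReal (by linarith [D.ρ_nonneg])]
  exact (dist_le_norm_add_norm _ _).trans (add_le_add (f.2.2 t) (g.2.2 t))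

noncomputable def rhsMap (f : D.ball) : D.ball :=
  ⟨ofFun (D.rhs (D.inBall_extend f.2)), D.continuous_rhs_apply _, D.norm_rhs_le _⟩

theorem contractingWith_rhsMap : ContractingWith D.K D.rhsMap := by
  refine ⟨by rw [← NNReal.coe_lt_coe, coe_K, NNReal.coe_one]; exact D.hρ₂, fun f g => ?_⟩
  set δ := (edist f g).toReal
  have hδ : ∀ r ∈ Icc D.a D.b, ‖D.extend f r - D.extend g r‖ ≤ δ := fun r hr => by
    rw [extend, extend, IccExtend_of_mem _ _ hr, IccExtend_of_mem _ _ hr, ← dist_eq_norm,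
      dist_edist]
    exact ENNReal.toReal_mono (D.edist_ne_top f g) UniformFun.edist_eval_le
  rw [← ENNReal.ofReal_toReal (D.edist_ne_top f g), ← ENNReal.ofReal_coe_nnreal,
    ← ENNReal.ofReal_mul D.K.coe_nonneg]
  refine UniformFun.edist_le.2 fun t => (edist_le_ofReal (by positivity)).2 ?_
  rw [dist_eq_norm]
  show ‖D.rhs _ t - D.rhs _ t‖ ≤ D.K * δ
  rw [rhs, rhs, sub_sub_sub_cancel_left, norm_sub_rev]
  exact D.norm_integralCLM_sub_le _ _ hδ t

theorem isSolution_extend {f : D.ball} (hf : IsFixedPt D.rhsMap f) :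
    D.IsSolution (D.extend f) :=
  fun t ht x => calc
    D.extend f t x = toFun f.1 ⟨t, ht⟩ x := by rw [extend, IccExtend_of_mem _ _ ht]
    _ = toFun (D.rhsMap f).1 ⟨t, ht⟩ x := by rw [hf.eq]
    _ = _ := rfl

theorem isFixedPt_ofInBall {P : ℝ → X₁ →L[ℝ] X₂} (hP : D.InBall P) (hsol : D.IsSolution P) :
    IsFixedPt D.rhsMap (D.ofInBall hP) := by
  refine Subtype.ext (funext fun t => ContinuousLinearMap.ext fun x => ?_)
  show D.Q0 t x - ∫ r in t..D.b, D.kernel (D.extend (D.ofInBall hP)) t r x = P t x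
  rw [hsol t t.2 x, D.integral_kernel_congr (D.extend_ofInBall hP) t.2]

theorem exists_unique_isSolution [CompleteSpace X₂] :
    ∃ P, D.InBall P ∧ D.IsSolution P ∧
      ∀ P', D.InBall P' → D.IsSolution P' → EqOn P' P (Icc D.a D.b) := by
  have : CompleteSpace D.ball := D.isClosed_ball.completeSpace_coe
  obtain ⟨f, hf, -⟩ :=
    D.contractingWith_rhsMap.exists_fixedPoint (D.ofInBall D.inBall_Q0) (D.edist_ne_top _ _)
  refine ⟨D.extend f, D.inBall_extend f.2, D.isSolution_extend hf, fun P' hP' hsol t ht => ?_⟩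
  obtain rfl := (D.contractingWith_rhsMap.eq_or_edist_eq_top_of_fixedPoints hf
    (D.isFixedPt_ofInBall hP' hsol)).resolve_right (D.edist_ne_top _ _)
  exact (D.extend_ofInBall hP' ht).symm

end RiccatiData

theorem riccati_quadratic_equation_unique_solution_in_ball_general
    {X₁ X₂ : Type*}
    [NormedAddCommGroup X₁] [NormedSpace ℝ X₁]
    [NormedAddCommGroup X₂] [NormedSpace ℝ X₂] [CompleteSpace X₂]
    (a b : ℝ) (hab : a ≤ b)
    -- uniformly bounded families Q⁽¹⁾, Q⁽²⁾, strongly continuous in each variable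
    (Q1 : ℝ → ℝ → X₁ →L[ℝ] X₁) (Q2 : ℝ → ℝ → X₂ →L[ℝ] X₂)
    (M₁ M₂ : ℝ)
    (hQ1bdd : ∀ t s : ℝ, a ≤ t → t ≤ s → s ≤ b → ‖Q1 s t‖ ≤ M₁)
    (hQ2bdd : ∀ t s : ℝ, a ≤ t → t ≤ s → s ≤ b → ‖Q2 s t‖ ≤ M₂)
    (hQ1sc₁ : ∀ x : X₁, ∀ t ∈ Set.Icc a b, ContinuousOn (fun s => Q1 s t x) (Set.Icc t b))
    (hQ1sc₂ : ∀ x : X₁, ∀ s ∈ Set.Icc a b, ContinuousOn (fun t => Q1 s t x) (Set.Icc a s))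
    (hQ2sc₁ : ∀ y : X₂, ∀ t ∈ Set.Icc a b, ContinuousOn (fun s => Q2 s t y) (Set.Icc t b))
    (hQ2sc₂ : ∀ y : X₂, ∀ s ∈ Set.Icc a b, ContinuousOn (fun t => Q2 s t y) (Set.Icc a s))
    -- coefficient B with sup-norm bound
    (B : ℝ → X₂ →L[ℝ] X₁)
    (hBsc : ∀ y : X₂, ContinuousOn (fun t => B t y) (Set.Icc a b))
    (nB : ℝ) (hnB : ∀ t ∈ Set.Icc a b, ‖B t‖ ≤ nB)
    -- free term Q₀ with sup-norm bound
    (Q0 : ℝ → X₁ →L[ℝ] X₂)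
    (hQ0sc : ∀ x : X₁, ContinuousOn (fun t => Q0 t x) (Set.Icc a b))
    (nQ0 : ℝ) (hnQ0 : ∀ t ∈ Set.Icc a b, ‖Q0 t‖ ≤ nQ0)
    -- the number ρ
    (ρ : ℝ) (hρ₁ : nQ0 + ρ ^ 2 * (b - a) * M₁ * M₂ * nB ≤ ρ)
    (hρ₂ : 2 * ρ * (b - a) * M₁ * M₂ * nB < 1) :
    -- unique solution in the ball B_ρ
    ∃ P : ℝ → X₁ →L[ℝ] X₂,
      (∀ x : X₁, ContinuousOn (fun t => P t x) (Set.Icc a b)) ∧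
      (∀ t ∈ Set.Icc a b, ‖P t‖ ≤ ρ) ∧
      (∀ t ∈ Set.Icc a b, ∀ x : X₁,
        P t x = Q0 t x - ∫ r in t..b, Q2 r t (P r (B r (P r (Q1 r t x))))) ∧
      (∀ P' : ℝ → X₁ →L[ℝ] X₂,
        (∀ x : X₁, ContinuousOn (fun t => P' t x) (Set.Icc a b)) →
        (∀ t ∈ Set.Icc a b, ‖P' t‖ ≤ ρ) →
        (∀ t ∈ Set.Icc a b, ∀ x : X₁,
          P' t x = Q0 t x - ∫ r in t..b, Q2 r t (P' r (B r (P' r (Q1 r t x))))) →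
        ∀ t ∈ Set.Icc a b, P' t = P t) := by
  let D : RiccatiData X₁ X₂ := ⟨a, b, hab, Q1, Q2, M₁, M₂, hQ1bdd, hQ2bdd, hQ1sc₁, hQ1sc₂,
    hQ2sc₁, hQ2sc₂, B, hBsc, nB, hnB, Q0, hQ0sc, nQ0, hnQ0, ρ, hρ₁, hρ₂⟩
  obtain ⟨P, hP, hsol, huniq⟩ := D.exists_unique_isSolution
  exact ⟨P, hP.1, hP.2, hsol, fun P' hc hb hsol' => huniq P' ⟨hc, hb⟩ hsol'⟩

/-- under the contraction conditions, the quadratic integral equation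
`P(t) = Q₀(t) − ∫_t^b Q⁽²⁾_{r,t}P(r)B(r)P(r)Q⁽¹⁾_{r,t}dr` has a unique strongly
continuous solution with `‖P‖ᵤ ≤ ρ`. -/
theorem riccati_quadratic_equation_unique_solution_in_ball
    {X₁ X₂ : Type*}
    [NormedAddCommGroup X₁] [NormedSpace ℝ X₁] [CompleteSpace X₁]
    [NormedAddCommGroup X₂] [NormedSpace ℝ X₂] [CompleteSpace X₂]
    (a b : ℝ) (hab : a ≤ b)
    -- uniformly bounded families Q⁽¹⁾, Q⁽²⁾, strongly continuous in each variable
    (Q1 : ℝ → ℝ → X₁ →L[ℝ] X₁) (Q2 : ℝ → ℝ → X₂ →L[ℝ] X₂)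
    (M₁ M₂ : ℝ)
    (hQ1bdd : ∀ t s : ℝ, a ≤ t → t ≤ s → s ≤ b → ‖Q1 s t‖ ≤ M₁)
    (hQ2bdd : ∀ t s : ℝ, a ≤ t → t ≤ s → s ≤ b → ‖Q2 s t‖ ≤ M₂)
    (hQ1sc₁ : ∀ x : X₁, ∀ t ∈ Set.Icc a b, ContinuousOn (fun s => Q1 s t x) (Set.Icc t b))
    (hQ1sc₂ : ∀ x : X₁, ∀ s ∈ Set.Icc a b, ContinuousOn (fun t => Q1 s t x) (Set.Icc a s))
    (hQ2sc₁ : ∀ y : X₂, ∀ t ∈ Set.Icc a b, ContinuousOn (fun s => Q2 s t y) (Set.Icc t b))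
    (hQ2sc₂ : ∀ y : X₂, ∀ s ∈ Set.Icc a b, ContinuousOn (fun t => Q2 s t y) (Set.Icc a s))
    -- coefficient B with sup-norm bound
    (B : ℝ → X₂ →L[ℝ] X₁)
    (hBsc : ∀ y : X₂, ContinuousOn (fun t => B t y) (Set.Icc a b))
    (nB : ℝ) (hnB : ∀ t ∈ Set.Icc a b, ‖B t‖ ≤ nB)
    -- free term Q₀ with sup-norm bound
    (Q0 : ℝ → X₁ →L[ℝ] X₂)
    (hQ0sc : ∀ x : X₁, ContinuousOn (fun t => Q0 t x) (Set.Icc a b))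
    (nQ0 : ℝ) (hnQ0 : ∀ t ∈ Set.Icc a b, ‖Q0 t‖ ≤ nQ0)
    -- the number ρ
    (ρ : ℝ) (hρ₁ : nQ0 + ρ ^ 2 * (b - a) * M₁ * M₂ * nB ≤ ρ)
    (hρ₂ : 2 * ρ * (b - a) * M₁ * M₂ * nB < 1) :
    -- unique solution in the ball B_ρ
    ∃ P : ℝ → X₁ →L[ℝ] X₂,
      (∀ x : X₁, ContinuousOn (fun t => P t x) (Set.Icc a b)) ∧
      (∀ t ∈ Set.Icc a b, ‖P t‖ ≤ ρ) ∧
      (∀ t ∈ Set.Icc a b, ∀ x : X₁,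
        P t x = Q0 t x - ∫ r in t..b, Q2 r t (P r (B r (P r (Q1 r t x))))) ∧
      (∀ P' : ℝ → X₁ →L[ℝ] X₂,
        (∀ x : X₁, ContinuousOn (fun t => P' t x) (Set.Icc a b)) →
        (∀ t ∈ Set.Icc a b, ‖P' t‖ ≤ ρ) →
        (∀ t ∈ Set.Icc a b, ∀ x : X₁,
          P' t x = Q0 t x - ∫ r in t..b, Q2 r t (P' r (B r (P' r (Q1 r t x))))) →
        ∀ t ∈ Set.Icc a b, P' t = P t) :=
  riccati_quadratic_equation_unique_solution_in_ball_general a b hab Q1 Q2 M₁ M₂ hQ1bdd hQ2bdd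
    hQ1sc₁ hQ1sc₂ hQ2sc₁ hQ2sc₂ B hBsc nB hnB Q0 hQ0sc nQ0 hnQ0 ρ hρ₁ hρ₂
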